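/- arXiv:2011.13839 — 5 statements merged into one kernel-verified Lean document; each statement's English description precedes it below -/
import Mathlib

section
/- The functor X ↦ X × X on posets preserves canonical coinserters of finite posets: if P is a finite poset with canonical coinserter presentation p₀, p₁ : Fin k → Fin n (listing comparable pairs) and identity coinserter map Fin n → P, then P × P (with componentwise order) is a coinserter of the pair p₀ × p₀, p₁ × p₁ : Fin k × Fin k → Fin n × Fin n. Equivalently: (a,b) ≤ (a',b') in P × P if and only if there exist s, t < k with a = p₀(s), a' = p₁(s), b = p₀(t), b' = p₁(t). -/
/-- The functor `X ↦ X × X` preserves canonical coinserters of finite posets: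
if `p₀, p₁ : Fin k → Fin n` enumerate the comparable pairs of a finite poset
`P` (enumerated by `e : Fin n ≃ P`), then the order of `P × P` is exactly
enumerated by the pair `p₀ × p₀, p₁ × p₁ : Fin k × Fin k → Fin n × Fin n`:
`(e a, e b) ≤ (e a', e b')` in `P × P` iff there are `s t : Fin k` with
`(a, a') = (p₀ s, p₁ s)` and `(b, b') = (p₀ t, p₁ t)`. -/
theorem stmt3 (n k : ℕ) (P : Type*) [PartialOrder P] (e : Fin n ≃ P)
    (p₀ p₁ : Fin k → Fin n)
    (henum : ∀ a b : Fin n, e a ≤ e b ↔ ∃ t : Fin k, p₀ t = a ∧ p₁ t = b) :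
    ∀ a a' b b' : Fin n,
      ((e a, e b) : P × P) ≤ (e a', e b') ↔
        ∃ s t : Fin k, p₀ s = a ∧ p₁ s = a' ∧ p₀ t = b ∧ p₁ t = b' := by
  intro a a' b b'
  constructor
  · rintro ⟨h1, h2⟩
    obtain ⟨s, hs1, hs2⟩ := (henum a a').mp h1
    obtain ⟨t, ht1, ht2⟩ := (henum b b').mp h2
    exact ⟨s, t, hs1, hs2, ht1, ht2⟩
  · rintro ⟨s, t, hs1, hs2, ht1, ht2⟩
    exact ⟨(henum a a').mpr ⟨s, hs1, hs2⟩, (henum b b').mpr ⟨t, ht1, ht2⟩⟩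
end

section
/- Coinserters of reflexive pairs of monotone maps exist in the category of posets: given monotone f₀, f₁ : A → B admitting a common monotone section i : B → A (f₀ ∘ i = id_B = f₁ ∘ i), there exists a poset C and a surjective monotone map c : B → C with c ∘ f₀ ≤ c ∘ f₁, such that every monotone u : B → D with u ∘ f₀ ≤ u ∘ f₁ factors as u = v ∘ c for a unique monotone v : C → D, and u ≤ u' implies v ≤ v' for the corresponding factorizations. -/
namespace Stmt5Aux

variable {A B : Type} [PartialOrder A] [PartialOrder B] (f₀ f₁ : A →o B)

/-- One-step relation generating the coinserter order. -/
def step (b b' : B) : Prop := b ≤ b' ∨ ∃ a, b = f₀ a ∧ b' = f₁ a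

/-- The preorder generated by `≤` and `f₀ a ≤ f₁ a`. -/
def s : B → B → Prop := Relation.ReflTransGen (step f₀ f₁)

lemma s_refl (b : B) : s f₀ f₁ b b := Relation.ReflTransGen.refl

lemma s_trans {a b c : B} (h : s f₀ f₁ a b) (h' : s f₀ f₁ b c) : s f₀ f₁ a c :=
  Relation.ReflTransGen.trans h h'

lemma s_of_le {a b : B} (h : a ≤ b) : s f₀ f₁ a b :=
  Relation.ReflTransGen.single (Or.inl h)

lemma s_pair (a : A) : s f₀ f₁ (f₀ a) (f₁ a) :=
  Relation.ReflTransGen.single (Or.inr ⟨a, rfl, rfl⟩)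

/-- Any compatible monotone map respects `s`. -/
lemma le_of_s {D : Type} [PartialOrder D] (u : B →o D)
    (hu : ∀ a : A, u (f₀ a) ≤ u (f₁ a)) {b b' : B} (h : s f₀ f₁ b b') :
    u b ≤ u b' := by
  induction h with
  | refl => exact le_rfl
  | tail _ hstep ih =>
      refine le_trans ih ?_
      rcases hstep with h | ⟨a, rfl, rfl⟩
      · exact u.mono h
      · exact hu a

def sSetoid : Setoid B :=
  ⟨fun a b => s f₀ f₁ a b ∧ s f₀ f₁ b a,
   fun a => ⟨s_refl _ _ a, s_refl _ _ a⟩,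
   fun h => ⟨h.2, h.1⟩,
   fun h h' => ⟨s_trans _ _ h.1 h'.1, s_trans _ _ h'.2 h.2⟩⟩

def C : Type := Quotient (sSetoid f₀ f₁)

instance : PartialOrder (C f₀ f₁) where
  le := Quotient.lift₂ (s f₀ f₁) (by
    rintro a b a' b' ⟨ha, ha'⟩ ⟨hb, hb'⟩
    exact propext ⟨fun h => s_trans _ _ ha' (s_trans _ _ h hb),
      fun h => s_trans _ _ ha (s_trans _ _ h hb')⟩)
  le_refl := by rintro ⟨a⟩; exact s_refl _ _ a
  le_trans := by rintro ⟨a⟩ ⟨b⟩ ⟨c⟩ h h'; exact s_trans _ _ h h'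
  le_antisymm := by rintro ⟨a⟩ ⟨b⟩ h h'; exact Quotient.sound ⟨h, h'⟩

def cmap : B →o C f₀ f₁ where
  toFun := Quotient.mk _
  monotone' := fun _ _ h => s_of_le _ _ h

end Stmt5Aux

open Stmt5Aux in
/-- Coinserters of reflexive pairs exist in `Pos`: given monotone maps
`f₀ f₁ : A → B` with a common monotone section `i`, there is a poset `C` and a
surjective monotone `c : B → C` with `c ∘ f₀ ≤ c ∘ f₁`, universal among such
maps, with the factorization operation monotone. -/
theorem stmt5 (A B : Type) [PartialOrder A] [PartialOrder B]
    (f₀ f₁ : A →o B) (i : B →o A)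
    (h₀ : f₀.comp i = OrderHom.id) (h₁ : f₁.comp i = OrderHom.id) :
    ∃ (C : Type) (_ : PartialOrder C) (c : B →o C),
      Function.Surjective c ∧
      (∀ a : A, c (f₀ a) ≤ c (f₁ a)) ∧
      (∀ (D : Type) [PartialOrder D] (u : B →o D),
        (∀ a : A, u (f₀ a) ≤ u (f₁ a)) → ∃! v : C →o D, u = v.comp c) ∧
      (∀ (D : Type) [PartialOrder D] (u u' : B →o D) (v v' : C →o D),
        u = v.comp c → u' = v'.comp c → u ≤ u' → v ≤ v') := by
  refine ⟨Stmt5Aux.C f₀ f₁, inferInstance, cmap f₀ f₁, ?_, ?_, ?_, ?_⟩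
  · rintro ⟨b⟩; exact ⟨b, rfl⟩
  · exact fun a => s_pair f₀ f₁ a
  · intro D _ u hu
    refine ⟨⟨Quotient.lift u (fun a b h => le_antisymm
        (le_of_s f₀ f₁ u hu h.1) (le_of_s f₀ f₁ u hu h.2)), ?_⟩, ?_, ?_⟩
    · rintro ⟨a⟩ ⟨b⟩ h; exact le_of_s f₀ f₁ u hu h
    · ext b; rfl
    · rintro v rfl
      ext ⟨b⟩
      rfl
  · intro D _ u u' v v' hv hv' hle
    rintro ⟨b⟩
    have := hle b
    rw [hv, hv'] at this
    exact this
end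

section
/- For the free ordered-algebra monad T on Pos for partial comparable-pair algebras — where TX is the set of terms generated by: elements of X are terms, and for terms u_0 ≤ u_1 the expression α(u_0,u_1) is a term, ordered inductively (elements of X as in X; α(u_0,u_1) ≤ α(v_0,v_1) iff u_0 ≤ v_0 and u_1 ≤ v_1) — the functor T does not preserve the canonical coinserter of the 2-chain: the induced map Tc : T{x_0, x_1} → T{x_0 ≤ x_1} is not surjective, since α(x_0, x_1) ∈ T{x_0 ≤ x_1} is not in its image, while every coinserter map in Pos is surjective. -/
/-- Binary trees of variables: the raw terms `var x` and `α(u₀,u₁)`. -/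
inductive PT (X : Type) : Type
  | var : X → PT X
  | node : PT X → PT X → PT X

/-- The inductively defined order on terms over variables ordered by `r`:
variables as given by `r`, and `α(u₀,u₁) ≤ α(v₀,v₁)` iff `u₀ ≤ v₀` and
`u₁ ≤ v₁`. -/
inductive PTle {X : Type} (r : X → X → Prop) : PT X → PT X → Prop
  | var {x y : X} : r x y → PTle r (.var x) (.var y)
  | node {a b c d : PT X} : PTle r a c → PTle r b d →
      PTle r (.node a b) (.node c d)

/-- Terms of the partial comparable-pair algebra monad: elements of `X` are
terms, and `α(u₀,u₁)` is a term whenever `u₀ ≤ u₁`. -/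
inductive WF {X : Type} (r : X → X → Prop) : PT X → Prop
  | var (x : X) : WF r (.var x)
  | node {a b : PT X} : WF r a → WF r b → PTle r a b → WF r (.node a b)

theorem PTle.mono {X : Type} {r r' : X → X → Prop}
    (h : ∀ x y, r x y → r' x y) {s t : PT X} (hst : PTle r s t) :
    PTle r' s t := by
  induction hst with
  | var hxy => exact .var (h _ _ hxy)
  | node _ _ ih1 ih2 => exact .node ih1 ih2

theorem WF.mono {X : Type} {r r' : X → X → Prop}
    (h : ∀ x y, r x y → r' x y) {t : PT X} (ht : WF r t) : WF r' t := by
  induction ht with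
  | var x => exact .var x
  | node _ _ hab ih1 ih2 => exact .node ih1 ih2 (hab.mono h)

/-- The free partial comparable-pair algebra monad `T` does not preserve the
canonical coinserter of the `2`-chain: the term `α(x₀,x₁)` is a term over the
chain `{x₀ ≤ x₁}` but not over the discrete poset `{x₀, x₁}`, so the induced
map `Tc : T{x₀,x₁} → T{x₀ ≤ x₁}` (which is the inclusion of terms over the
discrete order into terms over the chain) is not surjective. -/
theorem stmt14 :
    WF (fun a b : Fin 2 => a ≤ b) (PT.node (PT.var 0) (PT.var 1)) ∧
    ¬ WF (fun a b : Fin 2 => a = b) (PT.node (PT.var 0) (PT.var 1)) ∧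
    ¬ Function.Surjective
        (fun s : {t : PT (Fin 2) // WF (fun a b : Fin 2 => a = b) t} =>
          (⟨s.1, s.2.mono fun _ _ h => le_of_eq h⟩ :
            {t : PT (Fin 2) // WF (fun a b : Fin 2 => a ≤ b) t})) := by
  have hwf : WF (fun a b : Fin 2 => a ≤ b) (PT.node (PT.var 0) (PT.var 1)) :=
    .node (.var 0) (.var 1) (.var (by decide))
  have hnot : ¬ WF (fun a b : Fin 2 => a = b) (PT.node (PT.var 0) (PT.var 1)) := by
    intro h
    rcases h with _ | ⟨_, _, hle⟩
    rcases hle with ⟨h01⟩ | _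
    exact absurd h01 (by decide)
  refine ⟨hwf, hnot, ?_⟩
  intro hsurj
  obtain ⟨⟨t, ht⟩, heq⟩ := hsurj ⟨PT.node (PT.var 0) (PT.var 1), hwf⟩
  have : t = PT.node (PT.var 0) (PT.var 1) := congrArg Subtype.val heq
  exact hnot (this ▸ ht)
end

section
/- In the category of posets, every coinserter map is surjective: if c : B → C is a coinserter of a parallel pair f₀, f₁ : A → B, then c is surjective on underlying sets. -/
/-- In `Pos`, every coinserter map is surjective: if `c : B → C` is a
coinserter of `f₀, f₁ : A → B` (i.e. `c ∘ f₀ ≤ c ∘ f₁`, every `u` with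
`u ∘ f₀ ≤ u ∘ f₁` factors uniquely through `c`, and the factorization is
monotone), then `c` is surjective. -/
theorem stmt15 (A B C : Type) [PartialOrder A] [PartialOrder B] [PartialOrder C]
    (f₀ f₁ : A →o B) (c : B →o C)
    (hle : ∀ a : A, c (f₀ a) ≤ c (f₁ a))
    (huniv : ∀ (D : Type) [PartialOrder D] (u : B →o D),
      (∀ a : A, u (f₀ a) ≤ u (f₁ a)) → ∃! v : C →o D, u = v.comp c)
    (hmono : ∀ (D : Type) [PartialOrder D] (u u' : B →o D) (v v' : C →o D),
      u = v.comp c → u' = v'.comp c → u ≤ u' → v ≤ v') :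
    Function.Surjective c := by
  intro x
  by_contra hx
  push_neg at hx
  -- two monotone maps C → Prop agreeing on the image of c
  set g : C →o Prop := ⟨fun y => x ≤ y, fun y z hyz h => h.trans hyz⟩ with hg
  set h : C →o Prop := ⟨fun y => x < y, fun y z hyz h => h.trans_le hyz⟩ with hh
  have hcomp : g.comp c = h.comp c := by
    ext b
    simp only [OrderHom.comp_coe, Function.comp_apply, hg, hh, OrderHom.coe_mk]
    constructor
    · intro hle'
      exact lt_of_le_of_ne hle' (fun e => hx b e.symm)
    · exact le_of_lt
  have hu : ∀ a : A, (g.comp c) (f₀ a) ≤ (g.comp c) (f₁ a) := by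
    intro a
    exact fun hx' => hx'.trans (hle a)
  obtain ⟨v, _, hv⟩ := huniv Prop (g.comp c) hu
  have hgh : g = h := (hv g rfl).trans (hv h hcomp).symm
  have : x < x := by
    have := congrFun (congrArg (fun f : C →o Prop => (f : C → Prop)) hgh) x
    simp only [hg, hh, OrderHom.coe_mk] at this
    exact cast (show (x ≤ x) = (x < x) from this) (le_refl x)
  exact lt_irrefl x this
end

section
/- Let V be a variety of ordered Σ-algebras and Ṽ the variety of (non-ordered) Σ-algebras presented by all equations s = t (in countably many variables) that hold in every algebra of V. Then for every set X, the free algebra of Ṽ on X is the quotient of the term algebra on X by the congruence E_X° = E_X ∩ E_X⁻¹, where E_X is the set of inequations over X valid in V. Consequently the underlying set of the free ordered V-algebra on a discrete poset X equals the free Ṽ-algebra on X. -/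
/-- A finitary signature: a set of `n`-ary operation symbols for each `n`. -/
structure Signature where
  symbols : ℕ → Type

/-- Σ-terms over a set `X` of variables. -/
inductive Term (S : Signature) (X : Type) : Type
  | var : X → Term S X
  | op : ∀ {n : ℕ}, S.symbols n → (Fin n → Term S X) → Term S X

/-- An ordered Σ-algebra structure on a poset `A`: monotone operations. -/
structure AlgOn (S : Signature) (A : Type) [PartialOrder A] where
  op : ∀ n : ℕ, S.symbols n → (Fin n → A) → A
  mono : ∀ (n : ℕ) (σ : S.symbols n) (f g : Fin n → A),
    (∀ i, f i ≤ g i) → op n σ f ≤ op n σ g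

/-- A (non-ordered) Σ-algebra structure on a set `A`. -/
structure Alg (S : Signature) (A : Type) where
  op : ∀ n : ℕ, S.symbols n → (Fin n → A) → A

/-- The homomorphic extension of `f` to an ordered Σ-algebra. -/
def interp {S : Signature} {X A : Type} [PartialOrder A]
    (α : AlgOn S A) (f : X → A) : Term S X → A
  | .var x => f x
  | .op σ ts => α.op _ σ fun i => interp α f (ts i)

/-- The homomorphic extension of `f` to a non-ordered Σ-algebra. -/
def interpU {S : Signature} {X A : Type} (β : Alg S A) (f : X → A) :
    Term S X → A
  | .var x => f x
  | .op σ ts => β.op _ σ fun i => interpU β f (ts i)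

/-- Satisfaction of a set of inequations by an ordered Σ-algebra. -/
def Sat {S : Signature} {A : Type} [PartialOrder A] (α : AlgOn S A)
    (ineqs : Set (Term S ℕ × Term S ℕ)) : Prop :=
  ∀ p ∈ ineqs, ∀ f : ℕ → A, interp α f p.1 ≤ interp α f p.2

/-- Satisfaction of a set of equations by a non-ordered Σ-algebra. -/
def SatEqs {S : Signature} {A : Type} (β : Alg S A)
    (eqs : Set (Term S ℕ × Term S ℕ)) : Prop :=
  ∀ p ∈ eqs, ∀ f : ℕ → A, interpU β f p.1 = interpU β f p.2

/-- The equations (in countably many variables) valid in the variety of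
ordered Σ-algebras presented by `ineqs`; they present the classical variety
`Ṽ`. -/
def EqTheory (S : Signature) (ineqs : Set (Term S ℕ × Term S ℕ)) :
    Set (Term S ℕ × Term S ℕ) :=
  {p | ∀ (A : Type) [PartialOrder A] (α : AlgOn S A), Sat α ineqs →
    ∀ f : ℕ → A, interp α f p.1 = interp α f p.2}

/-- The inequations over the set `X` (a discrete poset) valid in the variety
presented by `ineqs`. -/
def Evalid (S : Signature) (ineqs : Set (Term S ℕ × Term S ℕ))
    (X : Type) (s t : Term S X) : Prop :=
  ∀ (A : Type) [PartialOrder A] (α : AlgOn S A), Sat α ineqs →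
    ∀ f : X → A, interp α f s ≤ interp α f t

namespace Stmt16Aux

variable {S : Signature}

/-- Variable renaming on terms. -/
def mapVar {X Y : Type} (φ : X → Y) : Term S X → Term S Y
  | .var x => .var (φ x)
  | .op σ ts => .op σ fun i => mapVar φ (ts i)

/-- Substitution on terms. -/
def subst {X Y : Type} (g : X → Term S Y) : Term S X → Term S Y
  | .var x => g x
  | .op σ ts => .op σ fun i => subst g (ts i)

/-- The list of variables occurring in a term. -/
def varsL {X : Type} : Term S X → List X
  | .var x => [x]
  | .op (n := n) _ ts => (List.finRange n).flatMap fun i => varsL (ts i)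

theorem interp_mapVar {X Y A : Type} [PartialOrder A] (α : AlgOn S A)
    (g : Y → A) (φ : X → Y) (u : Term S X) :
    interp α g (mapVar φ u) = interp α (fun x => g (φ x)) u := by
  induction u with
  | var x => rfl
  | op σ ts ih => simp only [mapVar, interp]; exact congrArg _ (funext ih)

theorem interpU_mapVar {X Y A : Type} (β : Alg S A)
    (g : Y → A) (φ : X → Y) (u : Term S X) :
    interpU β g (mapVar φ u) = interpU β (fun x => g (φ x)) u := by
  induction u with
  | var x => rfl
  | op σ ts ih => simp only [mapVar, interpU]; exact congrArg _ (funext ih)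

theorem interp_subst {X Y A : Type} [PartialOrder A] (α : AlgOn S A)
    (j : Y → A) (g : X → Term S Y) (u : Term S X) :
    interp α j (subst g u) = interp α (fun x => interp α j (g x)) u := by
  induction u with
  | var x => rfl
  | op σ ts ih => simp only [subst, interp]; exact congrArg _ (funext ih)

theorem interpU_congr {X A : Type} (β : Alg S A) (f₁ f₂ : X → A)
    (u : Term S X) (h : ∀ x ∈ varsL u, f₁ x = f₂ x) :
    interpU β f₁ u = interpU β f₂ u := by
  induction u with
  | var x => exact h x (by simp [varsL])
  | op σ ts ih =>
      simp only [interpU]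
      refine congrArg _ (funext fun i => ih i fun x hx => h x ?_)
      simp only [varsL, List.mem_flatMap]
      exact ⟨i, List.mem_finRange i, hx⟩

end Stmt16Aux

/-- For every set `X`, the free algebra of the classical variety `Ṽ` on `X` is
the quotient of the term algebra by the congruence
`E_X° = E_X ∩ E_X⁻¹`; since by Bloom's construction the free ordered
`V`-algebra on the discrete poset `X` is carried by this very quotient, the
underlying set of the free ordered `V`-algebra on `X` equals the free
`Ṽ`-algebra on `X`. -/
theorem stmt16 (S : Signature) (ineqs : Set (Term S ℕ × Term S ℕ))
    (X : Type) :
    letI E := Evalid S ineqs X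
    letI Q := Quot (fun s t : Term S X => E s t ∧ E t s)
    ∃ qop : ∀ n : ℕ, S.symbols n → (Fin n → Q) → Q,
      -- the operations are induced by those of the term algebra
      (∀ (n : ℕ) (σ : S.symbols n) (ts : Fin n → Term S X),
        qop n σ (fun i => Quot.mk _ (ts i)) = Quot.mk _ (Term.op σ ts)) ∧
      -- the quotient lies in `Ṽ`
      SatEqs (Alg.mk qop) (EqTheory S ineqs) ∧
      -- and it is free in `Ṽ` on `X` w.r.t. `x ↦ [var x]`
      (∀ (B : Type) (β : Alg S B), SatEqs β (EqTheory S ineqs) →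
        ∀ f : X → B,
          ∃! h : Q → B,
            (∀ (n : ℕ) (σ : S.symbols n) (qs : Fin n → Q),
              h (qop n σ qs) = β.op n σ fun i => h (qs i)) ∧
            (∀ x : X, h (Quot.mk _ (Term.var x)) = f x)) := by
  classical
  open Stmt16Aux in
  show ∃ _, _
  set E := Evalid S ineqs X with hE
  set R : Term S X → Term S X → Prop := fun s t => E s t ∧ E t s with hR
  -- E is reflexive and transitive, R is an equivalence
  have hErefl : ∀ s, E s s := fun s A _ α hα f => le_refl _
  have hEtrans : ∀ {s t u}, E s t → E t u → E s u :=
    fun h1 h2 A _ α hα f => le_trans (h1 A α hα f) (h2 A α hα f)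
  have hReqv : Equivalence R :=
    ⟨fun s => ⟨hErefl s, hErefl s⟩, fun ⟨a, b⟩ => ⟨b, a⟩,
      fun ⟨a, b⟩ ⟨c, d⟩ => ⟨hEtrans a c, hEtrans d b⟩⟩
  have hexact : ∀ {s t : Term S X}, Quot.mk R s = Quot.mk R t → R s t :=
    fun h => hReqv.eqvGen_iff.mp (Quot.eqvGen_exact h)
  -- E (hence R) is a congruence
  have hEcongr : ∀ (n : ℕ) (σ : S.symbols n) (ts ts' : Fin n → Term S X),
      (∀ i, E (ts i) (ts' i)) → E (.op σ ts) (.op σ ts') := by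
    intro n σ ts ts' h A _ α hα f
    exact α.mono n σ _ _ fun i => h i A α hα f
  have hRcongr : ∀ (n : ℕ) (σ : S.symbols n) (ts ts' : Fin n → Term S X),
      (∀ i, R (ts i) (ts' i)) → R (.op σ ts) (.op σ ts') :=
    fun n σ ts ts' h =>
      ⟨hEcongr n σ ts ts' fun i => (h i).1, hEcongr n σ ts' ts fun i => (h i).2⟩
  refine ⟨fun n σ qs => Quot.mk R (.op σ fun i => (qs i).out), ?_, ?_, ?_⟩
  case refine_1 =>
    intro n σ ts
    exact Quot.sound (hRcongr n σ _ ts fun i => hexact (Quot.out_eq _))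
  -- key: computing interpU on the quotient
  have hkey : ∀ (f : ℕ → Quot R) (u : Term S ℕ),
      interpU (Alg.mk fun n σ qs => Quot.mk R (.op σ fun i => (qs i).out)) f u
        = Quot.mk R (subst (fun k => (f k).out) u) := by
    intro f u
    induction u with
    | var k => exact (Quot.out_eq _).symm
    | op σ ts ih =>
        show Quot.mk R (.op σ fun i => Quot.out _) = _
        simp only [ih]
        exact Quot.sound (hRcongr _ σ _ _ fun i => hexact (Quot.out_eq _))
  case refine_2 =>
    intro p hp f
    rw [hkey, hkey]
    refine Quot.sound ?_
    constructor <;>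
      · intro A _ α hα j
        rw [interp_subst, interp_subst]
        exact le_of_eq (by rw [hp A α hα])
  case refine_3 =>
    intro B β hβ f
    -- well-definedness of interpU β f on the quotient
    have hwd : ∀ s t : Term S X, R s t → interpU β f s = interpU β f t := by
      intro s t ⟨hst, hts⟩
      set L : List X := varsL s ++ varsL t with hL
      set idx : X → ℕ := fun x => L.idxOf x with hidx
      have hmem : (mapVar idx s, mapVar idx t) ∈ EqTheory S ineqs := by
        intro A _ α hα j
        rw [interp_mapVar, interp_mapVar]
        exact le_antisymm (hst A α hα _) (hts A α hα _)
      set f' : ℕ → B :=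
        fun k => if h : k < L.length then f (L.get ⟨k, h⟩) else interpU β f s
        with hf'
      have hfix : ∀ x ∈ L, f' (idx x) = f x := by
        intro x hx
        have hlt : idx x < L.length := List.idxOf_lt_length_iff.2 hx
        simp only [hf', dif_pos hlt]
        exact congrArg f (List.idxOf_get _)
      have := hβ _ hmem f'
      rw [interpU_mapVar, interpU_mapVar] at this
      calc interpU β f s
          = interpU β (fun x => f' (idx x)) s :=
            (interpU_congr β _ f s fun x hx =>
              hfix x (List.mem_append_left _ hx)).symm
        _ = interpU β (fun x => f' (idx x)) t := this
        _ = interpU β f t :=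
            interpU_congr β _ f t fun x hx =>
              hfix x (List.mem_append_right _ hx)
    refine ⟨Quot.lift (interpU β f) hwd, ⟨?_, fun x => rfl⟩, ?_⟩
    · intro n σ qs
      show interpU β f (.op σ fun i => (qs i).out) = _
      show β.op n σ _ = _
      refine congrArg _ (funext fun i => ?_)
      conv_rhs => rw [← Quot.out_eq (qs i)]
    · rintro h' ⟨h1, h2⟩
      funext q
      induction q using Quot.ind with
      | _ u =>
        induction u with
        | var x => exact h2 x
        | op σ ts ih =>
            have : Quot.mk R (Term.op σ ts)
                = Quot.mk R (.op σ fun i => (Quot.mk R (ts i)).out) :=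
              Quot.sound (hRcongr _ σ _ _ fun i => (hexact (Quot.out_eq _)).symm)
            show h' (Quot.mk R (Term.op σ ts)) = interpU β f (Term.op σ ts)
            have e1 : h' (Quot.mk R (Term.op σ ts))
                = β.op _ σ fun i => h' (Quot.mk R (ts i)) := by
              rw [this]; exact h1 _ σ _
            exact e1.trans (congrArg _ (funext fun i => ih i))
end
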